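/- arXiv:math/0409571 — 5 statements merged into one kernel-verified Lean document; each statement's English description precedes it below -/
import Mathlib

section
/- Let V be a finite-dimensional complex vector space and n a natural number. The centralizer, inside the algebra End_ℂ(⊗ⁿV) of all linear endomorphisms of the n-th tensor power, of the set of permutation operators {ρ(σ) : σ ∈ S_n} equals the subalgebra generated by the diagonal operators {g^{⊗n} : g ∈ GL(V)}. -/
open scoped TensorProduct

/-- The permutation operator `ρ(σ)` on the `n`-th tensor power `⊗ⁿ V`, sending
`v₁ ⊗ … ⊗ vₙ` to `v_{σ⁻¹(1)} ⊗ … ⊗ v_{σ⁻¹(n)}`. -/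
noncomputable def permOperator (V : Type*) [AddCommGroup V] [Module ℂ V] (n : ℕ)
    (σ : Equiv.Perm (Fin n)) :
    Module.End ℂ (⨂[ℂ] _ : Fin n, V) :=
  (PiTensorProduct.reindex ℂ (fun _ : Fin n => V) σ).toLinearMap

/-- The diagonal operator `g^{⊗n}` on `⊗ⁿ V`, sending `v₁ ⊗ … ⊗ vₙ` to
`g v₁ ⊗ … ⊗ g vₙ`. -/
noncomputable def diagOperator (V : Type*) [AddCommGroup V] [Module ℂ V] (n : ℕ)
    (g : V ≃ₗ[ℂ] V) :
    Module.End ℂ (⨂[ℂ] _ : Fin n, V) :=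
  PiTensorProduct.map (fun _ : Fin n => g.toLinearMap)

/-!
Every endomorphism of `⊗ⁿV` is the image of a tensor `x ∈ ⊗ⁿ End V` under the `Sₙ`-equivariant
map `⊗ⁿ End V → End (⊗ⁿV)`. If the endomorphism commutes with the permutations, it is also the
image of the average of the `Sₙ`-orbit of `x`, a symmetric tensor. Symmetric tensors are spanned
by the powers `a^{⊗n}` (polarization, by inclusion–exclusion), and `a^{⊗n}` is the value at `t = 0`
of the polynomial curve `t ↦ (t + a)^{⊗n}`, which lies in the span of the `g^{⊗n}`, `g ∈ GL(V)`,
for all `t` outside the finite set `-spectrum a`. A polynomial curve that lies in a subspace at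
infinitely many parameters lies in it everywhere.
-/

open PiTensorProduct

open Polynomial in
theorem Submodule.sum_pow_smul_mem_of_infinite {K M ι : Type*} [Field K] [AddCommGroup M]
    [Module K M] [Fintype ι] (W : Submodule K M) (d : ι → ℕ) (z : ι → M) {s : Set K}
    (hs : s.Infinite) (h : ∀ t ∈ s, ∑ i, t ^ d i • z i ∈ W) (t₀ : K) :
    ∑ i, t₀ ^ d i • z i ∈ W := by
  rw [← Submodule.Quotient.mk_eq_zero, ← Module.forall_dual_apply_eq_zero_iff K]
  intro φ
  let P : K[X] := ∑ i, C (φ (W.mkQ (z i))) * X ^ d i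
  have hP : ∀ t, P.eval t = φ (W.mkQ (∑ i, t ^ d i • z i)) := by
    intro t
    simp only [P, eval_finsetSum, eval_mul, eval_C, eval_pow, eval_X, map_sum, map_smul,
      smul_eq_mul, mul_comm]
  have hP0 : P = 0 := P.eq_zero_of_infinite_isRoot <| hs.mono fun t ht => by
    rw [Set.mem_ofPred_eq, IsRoot, hP, W.mkQ_apply, (Submodule.Quotient.mk_eq_zero W).mpr (h t ht),
      map_zero]
  rw [← W.mkQ_apply, ← hP, hP0, eval_zero]

namespace MultilinearMap

theorem map_smul_add_univ {R ι M N : Type*} [CommSemiring R] [Fintype ι] [DecidableEq ι]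
    [AddCommMonoid M] [Module R M] [AddCommMonoid N] [Module R N]
    (f : MultilinearMap R (fun _ : ι => M) N) (t : R) (a b : ι → M) :
    f (fun i => t • b i + a i) = ∑ S : Finset ι, t ^ S.card • f (S.piecewise b a) := by
  rw [show (fun i => t • b i + a i) = (fun i => t • b i) + a from rfl, f.map_add_univ]
  refine Finset.sum_congr rfl fun S _ => ?_
  rw [← Finset.prod_const, ← f.map_piecewise_smul]
  congr 1
  ext i
  by_cases hi : i ∈ S <;> simp [hi]

theorem sum_neg_one_pow_card_smul_apply_sum_compl {R ι M N : Type*} [CommRing R] [Fintype ι]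
    [DecidableEq ι] [AddCommGroup M] [Module R M] [AddCommGroup N] [Module R N]
    (f : MultilinearMap R (fun _ : ι => M) N) (a : ι → M) :
    ∑ S : Finset ι, (-1 : ℤ) ^ S.card • f (fun _ => ∑ i ∈ Sᶜ, a i) =
      ∑ σ : Equiv.Perm ι, f (a ∘ σ) := by
  have hcoeff : ∀ r : ι → ι,
      ∑ S ∈ (Finset.univ.image r)ᶜ.powerset, (-1 : ℤ) ^ S.card =
        if Function.Surjective r then 1 else 0 := by
    intro r
    rw [Finset.sum_powerset_neg_one_pow_card]
    exact if_congr (by simp [Finset.eq_univ_iff_forall, Function.Surjective]) rfl rfl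
  calc ∑ S : Finset ι, (-1 : ℤ) ^ S.card • f (fun _ => ∑ i ∈ Sᶜ, a i)
      = ∑ S : Finset ι, ∑ r ∈ Fintype.piFinset fun _ => Sᶜ, (-1 : ℤ) ^ S.card • f (a ∘ r) := by
        simp_rw [f.map_sum_finset, Finset.smul_sum]
        rfl
    _ = ∑ r : ι → ι, ∑ S ∈ (Finset.univ.image r)ᶜ.powerset, (-1 : ℤ) ^ S.card • f (a ∘ r) := by
        refine Finset.sum_comm' fun S r => ?_
        simp only [Finset.mem_univ, true_and, Fintype.mem_piFinset, Finset.mem_compl,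
          Finset.mem_powerset, Finset.subset_compl_comm (s := S), Finset.image_subset_iff]
        simp
    _ = ∑ r ∈ Finset.univ.filter Function.Surjective, f (a ∘ r) := by
        simp_rw [← Finset.sum_smul, hcoeff, ite_smul, one_smul, zero_smul, Finset.sum_ite,
          Finset.sum_const_zero, add_zero]
    _ = ∑ σ : Equiv.Perm ι, f (a ∘ σ) := by
        symm
        refine Finset.sum_nbij (⇑) (fun σ _ => by simpa using σ.surjective)
          DFunLike.coe_injective.injOn (fun r hr => ?_) fun _ _ => rfl
        have hr : Function.Bijective r :=
          Finite.surjective_iff_bijective.mp (Finset.mem_filter.mp hr).2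
        exact ⟨Equiv.ofBijective r hr, Finset.mem_coe.mpr (Finset.mem_univ _), rfl⟩

end MultilinearMap

namespace PiTensorProduct

theorem piTensorHomMap_tprod_basis_end {R ι : Type*} [CommSemiring R] [Fintype ι]
    [DecidableEq ι] {M κ : ι → Type*} [∀ i, AddCommMonoid (M i)] [∀ i, Module R (M i)]
    [∀ i, Fintype (κ i)] [∀ i, DecidableEq (κ i)] (b : ∀ i, Module.Basis (κ i) R (M i))
    (p q : ∀ i, κ i) :
    piTensorHomMap (tprod R fun i => (b i).end (p i, q i)) =
      (Basis.piTensorProduct b).end (p, q) := by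
  refine (Basis.piTensorProduct b).ext fun m => ?_
  rw [Module.Basis.end_apply_apply, Basis.piTensorProduct_apply, piTensorHomMap_tprod_tprod]
  simp only [Module.Basis.end_apply_apply]
  split_ifs with h
  · subst h
    simp
  · obtain ⟨i, hi⟩ := Function.ne_iff.mp h
    exact MultilinearMap.map_coord_zero _ i (if_neg hi)

theorem piTensorHomMap_surjective {R ι : Type*} [CommSemiring R] [Fintype ι]
    {M : ι → Type*} [∀ i, AddCommMonoid (M i)] [∀ i, Module R (M i)]
    [∀ i, Module.Free R (M i)] [∀ i, Module.Finite R (M i)] :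
    Function.Surjective (piTensorHomMap : (⨂[R] i, Module.End R (M i)) →ₗ[R] _) := by
  classical
  let b := fun i => Module.Free.chooseBasis R (M i)
  rw [← LinearMap.range_eq_top, eq_top_iff, ← (Basis.piTensorProduct b).end.span_eq,
    Submodule.span_le]
  rintro _ ⟨⟨p, q⟩, rfl⟩
  exact ⟨_, piTensorHomMap_tprod_basis_end b p q⟩

theorem piTensorHomMap_reindex_comp {R ι ι' M N : Type*} [CommSemiring R]
    [AddCommMonoid M] [Module R M] [AddCommMonoid N] [Module R N] (e : ι ≃ ι')
    (x : ⨂[R] _ : ι, M →ₗ[R] N) :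
    piTensorHomMap (reindex R _ e x) ∘ₗ (reindex R (fun _ => M) e).toLinearMap =
      (reindex R (fun _ => N) e).toLinearMap ∘ₗ piTensorHomMap x := by
  induction x using PiTensorProduct.induction_on with
  | smul_tprod c f =>
    ext v
    simp
  | add x y hx hy =>
    simp only [map_add, LinearMap.add_comp, LinearMap.comp_add, hx, hy]

theorem sum_reindex_mem_span_tprod_const {R ι M : Type*} [CommRing R] [AddCommGroup M]
    [Module R M] [Fintype ι] [DecidableEq ι] (x : ⨂[R] _ : ι, M) :
    ∑ σ : Equiv.Perm ι, reindex R (fun _ => M) σ x ∈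
      Submodule.span R (Set.range fun m : M => tprod R fun _ : ι => m) := by
  induction x using PiTensorProduct.induction_on with
  | smul_tprod c a =>
    simp only [map_smul, reindex_tprod, ← Finset.smul_sum]
    have hinv : ∑ σ : Equiv.Perm ι, tprod R (fun i => a (σ.symm i)) =
        ∑ σ : Equiv.Perm ι, tprod R (a ∘ σ) :=
      Equiv.sum_comp (Equiv.inv _) fun σ : Equiv.Perm ι => tprod R (a ∘ σ)
    rw [hinv, ← (tprod R).sum_neg_one_pow_card_smul_apply_sum_compl]
    exact Submodule.smul_mem _ _ (Submodule.sum_mem _ fun S _ =>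
      Submodule.smul_of_tower_mem _ _ (Submodule.subset_span ⟨_, rfl⟩))
  | add x y hx hy =>
    simp only [map_add, Finset.sum_add_distrib]
    exact Submodule.add_mem _ hx hy

theorem tprod_const_mem_span_tprod_const_linearEquiv {K V ι : Type*} [Field K] [Infinite K]
    [AddCommGroup V] [Module K V] [FiniteDimensional K V] [Fintype ι] (a : Module.End K V) :
    tprod K (fun _ : ι => a) ∈
      Submodule.span K
        (Set.range fun g : V ≃ₗ[K] V => tprod K fun _ : ι => (g : Module.End K V)) := by
  classical
  have hcurve (t : K) := (tprod K).map_smul_add_univ t (fun _ : ι => a) fun _ => 1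
  convert Submodule.sum_pow_smul_mem_of_infinite _ (fun S : Finset ι => S.card)
    (fun S => tprod K (S.piecewise (fun _ => 1) fun _ => a))
    (Module.End.finite_spectrum (-a)).infinite_compl (fun t ht => ?_) 0
  · simp [← hcurve]
  · rw [← hcurve]
    obtain ⟨g, hg⟩ : ∃ g : V ≃ₗ[K] V, (g : Module.End K V) = t • 1 + a := by
      have hu : IsUnit (t • 1 + a : Module.End K V) := by
        simpa [spectrum.mem_iff, Algebra.algebraMap_eq_smul_one] using ht
      exact ⟨LinearMap.GeneralLinearGroup.generalLinearEquiv K V hu.unit,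
        by rw [LinearMap.GeneralLinearGroup.generalLinearEquiv_to_linearMap, hu.unit_spec]⟩
    exact Submodule.subset_span ⟨g, by simp [hg]⟩

end PiTensorProduct

theorem permOperator_commute_diagOperator {V : Type*} [AddCommGroup V] [Module ℂ V] {n : ℕ}
    (σ : Equiv.Perm (Fin n)) (g : V ≃ₗ[ℂ] V) :
    Commute (permOperator V n σ) (diagOperator V n g) :=
  (map_comp_reindex_eq (fun _ => g.toLinearMap) σ).symm

theorem mem_span_diagOperator_of_forall_commute {V : Type*} [AddCommGroup V] [Module ℂ V]
    [FiniteDimensional ℂ V] {n : ℕ} (f : Module.End ℂ (⨂[ℂ] _ : Fin n, V))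
    (hf : ∀ σ, Commute (permOperator V n σ) f) :
    f ∈ Submodule.span ℂ (Set.range (diagOperator V n)) := by
  obtain ⟨x, rfl⟩ := piTensorHomMap_surjective f
  have hinvariant : ∀ σ, piTensorHomMap (reindex ℂ _ σ x) = piTensorHomMap x := fun σ =>
    (LinearEquiv.eq_comp_toLinearMap_iff _ _).mp <|
      (piTensorHomMap_reindex_comp σ x).trans (hf σ).eq
  have haverage : piTensorHomMap x =
      (n.factorial : ℂ)⁻¹ • piTensorHomMap (∑ σ : Equiv.Perm (Fin n), reindex ℂ _ σ x) := by
    rw [map_sum, Finset.sum_congr rfl fun σ _ => hinvariant σ, Finset.sum_const,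
      Finset.card_univ, Fintype.card_perm, Fintype.card_fin, ← Nat.cast_smul_eq_nsmul ℂ,
      smul_smul, inv_mul_cancel₀ (Nat.cast_ne_zero.mpr n.factorial_ne_zero), one_smul]
  have hpowers :
      Submodule.span ℂ (Set.range fun a : Module.End ℂ V => tprod ℂ fun _ : Fin n => a) ≤
        Submodule.span ℂ
          (Set.range fun g : V ≃ₗ[ℂ] V => tprod ℂ fun _ : Fin n => (g : Module.End ℂ V)) := by
    rw [Submodule.span_le]
    rintro _ ⟨a, rfl⟩
    exact tprod_const_mem_span_tprod_const_linearEquiv a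
  have hdiag :
      Submodule.span ℂ
          (Set.range fun g : V ≃ₗ[ℂ] V => tprod ℂ fun _ : Fin n => (g : Module.End ℂ V)) ≤
        (Submodule.span ℂ (Set.range (diagOperator V n))).comap piTensorHomMap := by
    rw [Submodule.span_le]
    rintro _ ⟨g, rfl⟩
    exact Submodule.subset_span ⟨g, (piTensorHomMap_tprod_eq_map _).symm⟩
  rw [haverage]
  exact Submodule.smul_mem _ _ (hdiag (hpowers (sum_reindex_mem_span_tprod_const x)))

/-- The centralizer, inside `End_ℂ(⊗ⁿV)`, of the set of permutation operators equals
the subalgebra generated by the diagonal operators `g^{⊗n}`, `g ∈ GL(V)`. -/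
theorem centralizer_perm_eq_adjoin_diag (V : Type*) [AddCommGroup V] [Module ℂ V]
    [FiniteDimensional ℂ V] (n : ℕ) :
    Subalgebra.centralizer ℂ
        {f : Module.End ℂ (⨂[ℂ] _ : Fin n, V) | ∃ σ : Equiv.Perm (Fin n), f = permOperator V n σ}
      = Algebra.adjoin ℂ
        {f : Module.End ℂ (⨂[ℂ] _ : Fin n, V) | ∃ g : V ≃ₗ[ℂ] V, f = diagOperator V n g} := by
  have hdiag : Set.range (diagOperator V n) = {f | ∃ g : V ≃ₗ[ℂ] V, f = diagOperator V n g} :=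
    Set.ext fun _ => exists_congr fun _ => eq_comm
  apply le_antisymm
  · intro f hf
    rw [← hdiag]
    exact Algebra.span_le_adjoin ℂ _ <|
      mem_span_diagOperator_of_forall_commute f fun σ => hf _ ⟨σ, rfl⟩
  · rw [Algebra.adjoin_le_iff]
    rintro _ ⟨g, rfl⟩ _ ⟨σ, rfl⟩
    exact permOperator_commute_diagOperator σ g
end

section
/- Let A be a complex unital Banach algebra, P, Q ∈ A, and c ∈ ℝ. If the Weyl commutation relation exp(isP)·exp(itQ) = e^{icst}·(exp(itQ)·exp(isP)) holds for all s, t ∈ ℝ, then the elements P and Q satisfy the Heisenberg commutation relation P·Q − Q·P = −(ic)·1, where 1 is the unit of A. -/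
/-!
With `x = iP`, `y = iQ` and `κ = ic`, the Weyl relation reads
`exp(sx) exp(ty) = e^{κst} exp(ty) exp(sx)`. Differentiating in `s` at `0` gives
`x exp(ty) = κt exp(ty) + exp(ty) x`, and differentiating that in `t` at `0` gives
`xy - yx = κ`; since `xy - yx = -(PQ - QP)`, this is the Heisenberg relation.
-/

open NormedSpace

section Weyl

variable {A : Type*} [NormedRing A] [NormedAlgebra ℂ A] [CompleteSpace A] {x y : A} {κ : ℂ}

theorem mul_exp_smul_eq_of_weyl
    (hW : ∀ s t : ℝ,
      exp (s • x) * exp (t • y) = Complex.exp (κ * s * t) • (exp (t • y) * exp (s • x)))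
    (t : ℝ) : x * exp (t • y) = (κ * t) • exp (t • y) + exp (t • y) * x := by
  have hL : HasDerivAt (fun s : ℝ => exp (s • x) * exp (t • y)) (x * exp (t • y)) 0 := by
    simpa using (hasDerivAt_exp_smul_const x (0 : ℝ)).mul_const (exp (t • y))
  have hφ : HasDerivAt (fun s : ℝ => Complex.exp (κ * s * t)) (κ * t) 0 := by
    simpa using (((hasDerivAt_id (0 : ℝ)).ofReal_comp.const_mul κ).mul_const (t : ℂ)).cexp
  have hR : HasDerivAt (fun s : ℝ => Complex.exp (κ * s * t) • (exp (t • y) * exp (s • x)))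
      ((κ * t) • exp (t • y) + exp (t • y) * x) 0 := by
    refine (hφ.smul ((hasDerivAt_exp_smul_const x (0 : ℝ)).const_mul (exp (t • y)))).congr_deriv
      ?_
    simp [add_comm]
  exact hL.unique (by simpa only [← hW] using hR)

theorem commutator_eq_of_mul_exp_smul
    (h : ∀ t : ℝ, x * exp (t • y) = (κ * t) • exp (t • y) + exp (t • y) * x) :
    x * y - y * x = κ • 1 := by
  have hL : HasDerivAt (fun t : ℝ => x * exp (t • y)) (x * y) 0 := by
    simpa using (hasDerivAt_exp_smul_const y (0 : ℝ)).const_mul x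
  have hR : HasDerivAt (fun t : ℝ => (κ * t) • exp (t • y) + exp (t • y) * x) (κ • 1 + y * x) 0 := by
    have hφ : HasDerivAt (fun t : ℝ => κ * t) κ 0 := by
      simpa using (hasDerivAt_id (0 : ℝ)).ofReal_comp.const_mul κ
    refine ((hφ.smul (hasDerivAt_exp_smul_const y (0 : ℝ))).add
      ((hasDerivAt_exp_smul_const y (0 : ℝ)).mul_const x)).congr_deriv ?_
    simp
  rw [hL.unique (by simpa only [← h] using hR)]
  abel

theorem commutator_eq_of_weyl
    (hW : ∀ s t : ℝ,
      exp (s • x) * exp (t • y) = Complex.exp (κ * s * t) • (exp (t • y) * exp (s • x))) :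
    x * y - y * x = κ • 1 :=
  commutator_eq_of_mul_exp_smul (mul_exp_smul_eq_of_weyl hW)

end Weyl

/-- If the Weyl commutation relation
`exp(isP)·exp(itQ) = e^{icst}·(exp(itQ)·exp(isP))` holds for all real `s, t`, then the
Heisenberg commutation relation `P·Q − Q·P = −(ic)·1` holds. -/
theorem weyl_implies_heisenberg (A : Type*) [NormedRing A] [NormedAlgebra ℂ A]
    [CompleteSpace A] (P Q : A) (c : ℝ)
    (hW : ∀ s t : ℝ,
      NormedSpace.exp ((Complex.I * s) • P) * NormedSpace.exp ((Complex.I * t) • Q)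
        = Complex.exp (Complex.I * c * s * t) •
            (NormedSpace.exp ((Complex.I * t) • Q) * NormedSpace.exp ((Complex.I * s) • P))) :
    P * Q - Q * P = (-(Complex.I * c)) • (1 : A) := by
  have hsmul : ∀ (r : ℝ) (a : A), (Complex.I * r) • a = r • Complex.I • a := fun r a => by
    rw [mul_comm, mul_smul, Complex.coe_smul]
  have key := commutator_eq_of_weyl (x := Complex.I • P) (y := Complex.I • Q) (κ := Complex.I * c)
    (by simpa only [hsmul] using hW)
  simp only [smul_mul_smul_comm, Complex.I_mul_I, neg_one_smul, ← neg_sub'] at key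
  rw [neg_smul, ← key, neg_neg]
end

section
/- Let A be a complex unital Banach algebra, P, Q ∈ A, and c ∈ ℝ. If P·Q − Q·P = −(ic)·1, then the Weyl commutation relation holds: for all s, t ∈ ℝ, exp(isP)·exp(itQ) = e^{icst}·(exp(itQ)·exp(isP)). -/
/-! If `z = ab - ba` commutes with `a`, then `a^(n+1) b - b a^(n+1) = (n+1) z a^n`, and summing the
exponential series gives `exp a · b = (b + z) · exp a`. Exponentiating this semiconjugacy,
`exp a · exp b = exp (b + z) · exp a = exp z · exp b · exp a` when `z` also commutes with `b`.
For `a = isP`, `b = itQ` the commutator is the scalar `icst`. -/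

open NormedSpace
open scoped Nat

theorem pow_succ_mul_sub_mul_pow_succ {A : Type*} [Ring A] {a b z : A}
    (h : a * b - b * a = z) (hz : Commute a z) (n : ℕ) :
    a ^ (n + 1) * b - b * a ^ (n + 1) = (n + 1) • (z * a ^ n) := by
  induction n with
  | zero => simpa using h
  | succ n ih =>
    calc a ^ (n + 1 + 1) * b - b * a ^ (n + 1 + 1)
        = a * (a ^ (n + 1) * b - b * a ^ (n + 1)) + (a * b - b * a) * a ^ (n + 1) := by
          rw [pow_succ' a (n + 1)]; noncomm_ring
      _ = (n + 1 + 1) • (z * a ^ (n + 1)) := by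
          rw [ih, h, mul_smul_comm, ← mul_assoc, hz.eq, mul_assoc, ← pow_succ']
          exact (succ_nsmul _ _).symm

section Exp

variable {A : Type*} [NormedRing A] [NormedAlgebra ℚ A] [CompleteSpace A] {a b z : A}

theorem exp_mul_sub_mul_exp (h : a * b - b * a = z) (hz : Commute a z) :
    exp a * b - b * exp a = z * exp a := by
  have hexp := exp_series_hasSum_exp' (𝕂 := ℚ) a
  have hsum : HasSum (fun n ↦ (n !⁻¹ : ℚ) • (a ^ n * b - b * a ^ n))
      (exp a * b - b * exp a) := by
    simpa only [smul_sub, smul_mul_assoc, mul_smul_comm] using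
      (hexp.mul_right b).sub (hexp.mul_left b)
  have hshift (n : ℕ) : ((n + 1)! ⁻¹ : ℚ) • (a ^ (n + 1) * b - b * a ^ (n + 1))
      = z * ((n !⁻¹ : ℚ) • a ^ n) := by
    rw [pow_succ_mul_sub_mul_pow_succ h hz, ← Nat.cast_smul_eq_nsmul ℚ, smul_smul,
      mul_smul_comm]
    congr 1
    push_cast [Nat.factorial_succ]
    field_simp
  have hsum_shift := (hasSum_nat_add_iff' 1).mpr hsum
  simp only [hshift, Finset.range_one, Finset.sum_singleton] at hsum_shift
  simpa using ((hexp.mul_left z).unique hsum_shift).symm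

theorem exp_mul_exp_of_mul_sub_mul_eq (h : a * b - b * a = z) (ha : Commute a z)
    (hb : Commute b z) :
    exp a * exp b = exp z * (exp b * exp a) := by
  have hsemiconj : SemiconjBy (exp a) b (b + z) := by
    rw [SemiconjBy, add_mul, ← exp_mul_sub_mul_exp h ha]
    abel
  rw [hsemiconj.exp_right.eq, add_comm b z, exp_add_of_commute hb.symm, mul_assoc]

end Exp

/-- If `P·Q − Q·P = −(ic)·1`, then the Weyl commutation relation
`exp(isP)·exp(itQ) = e^{icst}·(exp(itQ)·exp(isP))` holds for all real `s, t`. -/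
theorem heisenberg_implies_weyl (A : Type*) [NormedRing A] [NormedAlgebra ℂ A]
    [CompleteSpace A] (P Q : A) (c : ℝ)
    (hH : P * Q - Q * P = (-(Complex.I * c)) • (1 : A)) :
    ∀ s t : ℝ,
      exp ((Complex.I * s) • P) * exp ((Complex.I * t) • Q)
        = Complex.exp (Complex.I * c * s * t) •
            (exp ((Complex.I * t) • Q) * exp ((Complex.I * s) • P)) := by
  intro s t
  let +nondep : NormedAlgebra ℚ A := .restrictScalars ℚ ℂ A
  have hcomm : (Complex.I * s) • P * (Complex.I * t) • Q
      - (Complex.I * t) • Q * (Complex.I * s) • P = algebraMap ℂ A (Complex.I * c * s * t) := by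
    rw [smul_mul_smul_comm, smul_mul_smul_comm, mul_comm (Complex.I * t), ← smul_sub, hH,
      smul_smul, Algebra.algebraMap_eq_smul_one]
    congr 1
    linear_combination (-(s : ℂ) * t * Complex.I * c) * Complex.I_mul_I
  rw [exp_mul_exp_of_mul_sub_mul_eq hcomm (Algebra.commutes _ _).symm (Algebra.commutes _ _).symm,
    ← algebraMap_exp_comm, ← Complex.exp_eq_exp_ℂ, ← Algebra.smul_def]
end

section
/- Let A be a complex unital Banach algebra, P, Q ∈ A, and c ∈ ℝ with P·Q − Q·P = −(ic)·1. Define W_{s,t} := exp(isP)·exp(itQ) for s, t ∈ ℝ. Then the addition law W_{s+s′, t+t′} = e^{ics′t}·(W_{s,t}·W_{s′,t′}) holds for all s, s′, t, t′ ∈ ℝ; that is, (s,t) ↦ W_{s,t} is a projective (ray) representation of the additive group ℝ², multiplicative up to the phase factor e^{ics′t}. -/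
/-!
If `a * b - b * a = θ • 1`, then `u ↦ exp (u • a) * b * exp (-(u • a))` has constant derivative
`θ • 1`, so conjugation by `exp a` shifts `b` by `θ • 1`; exponentiating the shifted element gives
`exp a * exp b = exp θ • (exp b * exp a)`. With `a = (i s') • P` and `b = (i t) • Q` this swaps the
two middle factors of `W_{s+s',t+t'} = exp(isP) exp(is'P) exp(itQ) exp(it'Q)` at the cost of the
phase `e^{ics't}`.
-/

open NormedSpace

noncomputable def weylOp {A : Type*} [NormedRing A] [NormedAlgebra ℂ A]
    [CompleteSpace A] (P Q : A) (s t : ℝ) : A :=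
  exp ((Complex.I * s) • P) * exp ((Complex.I * t) • Q)

section CentralCommutator

variable {𝕂 𝔸 : Type*} [RCLike 𝕂] [NormedRing 𝔸] [NormedAlgebra 𝕂 𝔸] [CompleteSpace 𝔸]

theorem exp_add_smul (x : 𝔸) (u v : 𝕂) : exp ((u + v) • x) = exp (u • x) * exp (v • x) := by
  let : NormedAlgebra ℚ 𝔸 := .restrictScalars ℚ 𝕂 𝔸
  rw [add_smul, exp_add_of_commute (((Commute.refl x).smul_left u).smul_right v)]

theorem exp_mul_mul_exp_neg_of_sub_eq_smul_one {a b : 𝔸} {θ : 𝕂} (h : a * b - b * a = θ • 1) :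
    exp a * b * exp (-a) = b + θ • 1 := by
  let : NormedAlgebra ℚ 𝔸 := .restrictScalars ℚ 𝕂 𝔸
  let f : 𝕂 → 𝔸 := fun u ↦ exp (u • a) * b * exp (u • -a) - u • θ • 1
  have hderiv : ∀ u, HasDerivAt f 0 u := by
    intro u
    have hinv : exp (u • a) * exp (u • -a) = 1 := by
      rw [smul_neg, ← exp_add_of_commute (Commute.refl _).neg_right, add_neg_cancel, exp_zero]
    refine ((((hasDerivAt_exp_smul_const a u).mul_const b).mul
      (hasDerivAt_exp_smul_const' (-a) u)).sub
      ((hasDerivAt_id u).smul_const (θ • (1 : 𝔸)))).congr_deriv ?_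
    calc _ = exp (u • a) * (a * b - b * a) * exp (u • -a) - θ • 1 := by
          simp only [one_smul]; noncomm_ring
      _ = 0 := by rw [h, mul_smul_comm, mul_one, smul_mul_assoc, hinv, sub_self]
  have hconst := is_const_of_deriv_eq_zero (fun u ↦ (hderiv u).differentiableAt)
    (fun u ↦ (hderiv u).deriv) 1 0
  simpa [f, sub_eq_iff_eq_add] using hconst

theorem exp_mul_exp_of_sub_eq_smul_one {a b : 𝔸} {θ : 𝕂} (h : a * b - b * a = θ • 1) :
    exp a * exp b = exp θ • (exp b * exp a) := by
  let : NormedAlgebra ℚ 𝔸 := .restrictScalars ℚ 𝕂 𝔸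
  have hsemiconj : SemiconjBy (exp a) b (b + θ • 1) := by
    rw [SemiconjBy, ← exp_mul_mul_exp_neg_of_sub_eq_smul_one h, mul_assoc _ (exp (-a)),
      ← exp_add_of_commute (Commute.refl a).neg_left, neg_add_cancel, exp_zero, mul_one]
  have hexp_scalar : exp (θ • (1 : 𝔸)) = exp θ • 1 := by
    rw [← Algebra.algebraMap_eq_smul_one, ← algebraMap_exp_comm, Algebra.algebraMap_eq_smul_one]
  rw [hsemiconj.exp_right, exp_add_of_commute ((Commute.one_right b).smul_right θ),
    hexp_scalar, mul_smul_comm, mul_one, smul_mul_assoc]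

theorem exp_smul_mul_exp_smul_of_sub_eq_smul_one {P Q : 𝔸} {z : 𝕂} (h : P * Q - Q * P = z • 1)
    (u v : 𝕂) : exp (u • P) * exp (v • Q) = exp (u * v * z) • (exp (v • Q) * exp (u • P)) := by
  refine exp_mul_exp_of_sub_eq_smul_one ?_
  rw [smul_mul_smul_comm, smul_mul_smul_comm, mul_comm v, ← smul_sub, h, smul_smul]

end CentralCommutator

/-- If `P·Q − Q·P = −(ic)·1`, then the Weyl operators `W_{s,t} = exp(isP)·exp(itQ)`
satisfy the addition law `W_{s+s′,t+t′} = e^{ics′t}·(W_{s,t}·W_{s′,t′})`: they form a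
projective (ray) representation of the additive group `ℝ²`, multiplicative up to the
phase factor `e^{ics′t}`. -/
theorem weylOp_addition_law (A : Type*) [NormedRing A] [NormedAlgebra ℂ A]
    [CompleteSpace A] (P Q : A) (c : ℝ)
    (hH : P * Q - Q * P = (-(Complex.I * c)) • (1 : A)) :
    ∀ s s' t t' : ℝ,
      weylOp P Q (s + s') (t + t')
        = Complex.exp (Complex.I * c * s' * t) • (weylOp P Q s t * weylOp P Q s' t') := by
  intro s s' t t'
  have hswap := exp_smul_mul_exp_smul_of_sub_eq_smul_one hH (Complex.I * s') (Complex.I * t)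
  have hphase : Complex.I * s' * (Complex.I * t) * -(Complex.I * c) = Complex.I * c * s' * t := by
    linear_combination (-(Complex.I * s' * t * c)) * Complex.I_sq
  rw [hphase, ← Complex.exp_eq_exp_ℂ] at hswap
  simp only [weylOp, Complex.ofReal_add, mul_add, exp_add_smul, mul_assoc]
  rw [← mul_assoc (exp ((Complex.I * s') • P)), hswap]
  simp only [smul_mul_assoc, mul_smul_comm, mul_assoc]
end

section
/- The Schrödinger representation is irreducible: if U is a closed linear subspace of L²(ℝ, ℂ) that is invariant under every translation operator T_t (induced by f ↦ f(· − t), t ∈ ℝ) and under every modulation operator M_s (induced by f ↦ (x ↦ e^{isx} f(x)), s ∈ ℝ), then U = {0} or U = L²(ℝ, ℂ). -/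
/-!
If `g ⊥ U` and `0 ≠ f ∈ U`, then `g` is orthogonal to every `x ↦ e^{2πiξx} f (x - t)`: for each `t`
the integrable function `x ↦ conj (f (x - t)) * g x` has vanishing Fourier transform, hence vanishes
almost everywhere. By Tonelli and translation invariance,
`(∫⁻ ‖f‖ₑ) * (∫⁻ ‖g‖ₑ) = ∫⁻ t, ∫⁻ x, ‖f (x - t)‖ₑ * ‖g x‖ₑ = 0`, so `g = 0` and `Uᗮ = ⊥`.
-/

open MeasureTheory Complex FourierTransform Real
open scoped ENNReal ComplexConjugate

theorem MeasureTheory.Integrable.ae_eq_zero_of_fourier_eq_zero {V E : Type*}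
    [NormedAddCommGroup V] [InnerProductSpace ℝ V] [FiniteDimensional ℝ V]
    [MeasurableSpace V] [BorelSpace V] [NormedAddCommGroup E] [NormedSpace ℂ E] [CompleteSpace E]
    {F : V → E} (hF : Integrable F) (h : 𝓕 F = 0) : F =ᵐ[volume] 0 := by
  refine ae_eq_zero_of_integral_contDiff_smul_eq_zero hF.locallyIntegrable fun φ hφ hφc => ?_
  have hψ : HasCompactSupport (ofRealCLM ∘ φ) := hφc.comp_left rfl
  let ψ : SchwartzMap V ℂ := 𝓕⁻ (hψ.toSchwartzMap (by fun_prop))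
  -- `φ` is the Fourier transform of the Schwartz function `ψ`, and `𝓕` is self-adjoint.
  calc ∫ x, φ x • F x = ∫ x, 𝓕 (⇑ψ) x • F x := by
        rw [← SchwartzMap.fourier_coe, FourierTransform.fourier_fourierInv_eq]
        rfl
    _ = ∫ x, ψ x • 𝓕 F x := by
        have := VectorFourier.integral_fourierIntegral_smul_eq_flip (L := innerₗ V)
          (μ := volume) (ν := volume)
          Real.continuous_fourierChar continuous_inner ψ.integrable hF
        rw [flip_innerₗ] at this
        exact this
    _ = 0 := by simp [h]

section Translates

variable {G : Type*} [MeasurableSpace G] [AddGroup G] [MeasurableAdd₂ G] [MeasurableNeg G]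
  {μ : Measure G} [SFinite μ] [μ.IsAddLeftInvariant] [μ.IsNegInvariant]

theorem lintegral_lintegral_sub_mul {f g : G → ℝ≥0∞} (hf : Measurable f) (hg : Measurable g) :
    ∫⁻ t, ∫⁻ x, f (x - t) * g x ∂μ ∂μ = (∫⁻ x, f x ∂μ) * ∫⁻ x, g x ∂μ := by
  rw [lintegral_lintegral_swap ((hf.comp (measurable_snd.sub measurable_fst)).mul
    (hg.comp measurable_snd)).aemeasurable]
  have hinner (x : G) : ∫⁻ t, f (x - t) * g x ∂μ = (∫⁻ x, f x ∂μ) * g x := by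
    rw [lintegral_mul_const _ (by fun_prop), lintegral_sub_left_eq_self]
  simp_rw [hinner, lintegral_const_mul _ hg]

theorem ae_eq_zero_or_ae_eq_zero_of_forall_ae_sub {E F : Type*} [NormedAddCommGroup E]
    [NormedAddCommGroup F] {f : G → E} {g : G → F} (hf : StronglyMeasurable f)
    (hg : StronglyMeasurable g) (h : ∀ t, ∀ᵐ x ∂μ, f (x - t) = 0 ∨ g x = 0) :
    f =ᵐ[μ] 0 ∨ g =ᵐ[μ] 0 := by
  have hprod : (∫⁻ x, ‖f x‖ₑ ∂μ) * ∫⁻ x, ‖g x‖ₑ ∂μ = 0 := by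
    rw [← lintegral_lintegral_sub_mul hf.enorm hg.enorm]
    refine lintegral_eq_zero_of_ae_eq_zero (ae_of_all _ fun t => ?_)
    refine lintegral_eq_zero_of_ae_eq_zero ?_
    filter_upwards [h t] with x hx
    rcases hx with hx | hx <;> simp [hx]
  refine (mul_eq_zero.mp hprod).imp (fun h0 => ?_) (fun h0 => ?_)
  · filter_upwards [(lintegral_eq_zero_iff hf.enorm).mp h0] with x hx
    simpa using hx
  · filter_upwards [(lintegral_eq_zero_iff hg.enorm).mp h0] with x hx
    simpa using hx

end Translates

local notation "L²" => Lp ℂ 2 (volume : Measure ℝ)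

theorem MeasureTheory.MemLp.exp_I_mul_mul {p : ℝ≥0∞} {φ : ℝ → ℂ} (hφ : MemLp φ p) (s : ℝ) :
    MemLp (fun x : ℝ => exp (I * s * x) * φ x) p := by
  have hexp : Continuous fun x : ℝ => exp (I * s * x) := by fun_prop
  refine hφ.of_le (hexp.aestronglyMeasurable.mul hφ.1) (ae_of_all _ fun x => ?_)
  rw [norm_mul, mul_assoc, ← ofReal_mul, norm_exp_I_mul_ofReal, one_mul]

theorem integrable_conj_comp_sub_mul (f g : L²) (t : ℝ) :
    Integrable (fun x => conj (f (x - t)) * g x) := by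
  have hf := (Lp.memLp f).comp_measurePreserving (measurePreserving_sub_right volume t)
  exact hf.star.integrable_mul (Lp.memLp g)

theorem inner_eq_fourier_conj_comp_sub_mul {f g h : L²} {t ξ : ℝ}
    (hh : ⇑h =ᵐ[volume] fun x => exp (I * ↑(2 * π * ξ) * x) * f (x - t)) :
    inner ℂ h g = 𝓕 (fun x => conj (f (x - t)) * g x) ξ := by
  rw [L2.inner_def, fourier_real_eq_integral_exp_smul]
  refine integral_congr_ae ?_
  filter_upwards [hh] with x hx
  have hexp : conj (exp (I * ↑(2 * π * ξ) * x)) = exp (↑(-2 * π * x * ξ) * I) := by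
    rw [← exp_conj]
    simp only [map_mul, conj_I, conj_ofReal]
    congr 1
    push_cast
    ring
  rw [RCLike.inner_apply, hx, map_mul, hexp, smul_eq_mul]
  ring

theorem exists_mem_ae_eq_exp_mul_comp_sub {U : Submodule ℂ L²}
    (htrans : ∀ (t : ℝ), ∀ f ∈ U, ∀ g : L², (⇑g =ᵐ[volume] fun x => f (x - t)) → g ∈ U)
    (hmod : ∀ (s : ℝ), ∀ f ∈ U, ∀ g : L²,
      (⇑g =ᵐ[volume] fun x => exp (I * s * x) * f x) → g ∈ U)
    {f : L²} (hf : f ∈ U) (t s : ℝ) :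
    ∃ h ∈ U, ⇑h =ᵐ[volume] fun x => exp (I * s * x) * f (x - t) := by
  let f' : L² := Lp.compMeasurePreserving (· - t) (measurePreserving_sub_right volume t) f
  have hf' : ⇑f' =ᵐ[volume] fun x => f (x - t) := Lp.coeFn_compMeasurePreserving _ _
  have hmem := (Lp.memLp f').exp_I_mul_mul s
  refine ⟨hmem.toLp _, hmod s f' (htrans t f hf f' hf') _ hmem.coeFn_toLp, ?_⟩
  filter_upwards [hmem.coeFn_toLp, hf'] with x hx hx'
  rw [hx, hx']

/-- The Schrödinger representation is irreducible: a closed subspace of `L²(ℝ, ℂ)`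
invariant under all translations `f ↦ f(· − t)` and all modulations
`f ↦ (x ↦ e^{isx} f(x))` is `{0}` or all of `L²(ℝ, ℂ)`. -/
theorem schroedinger_representation_irreducible
    (U : Submodule ℂ (Lp ℂ 2 (volume : Measure ℝ)))
    (hclosed : IsClosed (U : Set (Lp ℂ 2 (volume : Measure ℝ))))
    (htrans : ∀ (t : ℝ), ∀ f ∈ U, ∀ g : Lp ℂ 2 (volume : Measure ℝ),
      (⇑g =ᵐ[volume] fun x => f (x - t)) → g ∈ U)
    (hmod : ∀ (s : ℝ), ∀ f ∈ U, ∀ g : Lp ℂ 2 (volume : Measure ℝ),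
      (⇑g =ᵐ[volume] fun x => Complex.exp (Complex.I * s * x) * f x) → g ∈ U) :
    U = ⊥ ∨ U = ⊤ := by
  refine or_iff_not_imp_left.mpr fun hU => ?_
  obtain ⟨f, hfU, hf0⟩ := U.ne_bot_iff.mp hU
  have : CompleteSpace U := hclosed.completeSpace_coe
  rw [← Submodule.orthogonal_eq_bot_iff, Submodule.eq_bot_iff]
  intro g hg
  have hvanish (t : ℝ) : (fun x => conj (f (x - t)) * g x) =ᵐ[volume] 0 := by
    refine (integrable_conj_comp_sub_mul f g t).ae_eq_zero_of_fourier_eq_zero (funext fun ξ => ?_)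
    obtain ⟨h, hhU, hh⟩ := exists_mem_ae_eq_exp_mul_comp_sub htrans hmod hfU t (2 * π * ξ)
    rw [← inner_eq_fourier_conj_comp_sub_mul hh]
    exact Submodule.inner_right_of_mem_orthogonal hhU hg
  have hdisjoint (t : ℝ) : ∀ᵐ x ∂volume, f (x - t) = 0 ∨ g x = 0 := by
    filter_upwards [hvanish t] with x hx
    simpa using hx
  rcases ae_eq_zero_or_ae_eq_zero_of_forall_ae_sub (Lp.stronglyMeasurable f)
    (Lp.stronglyMeasurable g) hdisjoint with hf | hg
  · exact absurd (Lp.eq_zero_iff_ae_eq_zero.mpr hf) hf0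
  · exact Lp.eq_zero_iff_ae_eq_zero.mpr hg
end
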